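/- A pre-abelian category A is quasi-abelian if and only if there exists an exact structure E on A such that for any admissible monomorphisms c : B ↣ D and d : C ↣ D, the pullback projections a and b of the pullback of c and d are admissible monomorphisms. -/
import Mathlib


open CategoryTheory CategoryTheory.Limits

universe v u

variable (C : Type u) [Category.{v} C] [Preadditive C]

/-- A morphism is a *kernel* if it arises as the kernel of some morphism. -/
def IsKernelMorphism {X Y : C} (f : X ⟶ Y) : Prop :=
  ∃ (W : C) (g : Y ⟶ W) (w : f ≫ g = 0), Nonempty (IsLimit (KernelFork.ofι f w))

/-- A morphism is a *cokernel* if it arises as the cokernel of some morphism. -/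
def IsCokernelMorphism {X Y : C} (f : X ⟶ Y) : Prop :=
  ∃ (W : C) (g : W ⟶ X) (w : g ≫ f = 0), Nonempty (IsColimit (CokernelCofork.ofπ f w))

/-- A Quillen exact structure on an additive category: a class `E` of kernel-cokernel pairs,
closed under isomorphisms, containing the identities as admissible monomorphisms and
epimorphisms, with admissible monomorphisms and epimorphisms closed under composition, and
with admissible monomorphisms (resp. epimorphisms) stable under pushout (resp. pullback). -/
structure ExactStructure where
  /-- the class of exact (kernel-cokernel) pairs -/
  E : ∀ ⦃X Y Z : C⦄, (X ⟶ Y) → (Y ⟶ Z) → Prop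
  kernel_cokernel : ∀ ⦃X Y Z : C⦄ (f : X ⟶ Y) (g : Y ⟶ Z), E f g →
    ∃ w : f ≫ g = 0, Nonempty (IsLimit (KernelFork.ofι f w)) ∧
      Nonempty (IsColimit (CokernelCofork.ofπ g w))
  iso_closed : ∀ ⦃X Y Z X' Y' Z' : C⦄ (f : X ⟶ Y) (g : Y ⟶ Z) (f' : X' ⟶ Y') (g' : Y' ⟶ Z')
    (eX : X ≅ X') (eY : Y ≅ Y') (eZ : Z ≅ Z'),
    f ≫ eY.hom = eX.hom ≫ f' → g ≫ eZ.hom = eY.hom ≫ g' → E f g → E f' g'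
  id_admMono : ∀ X : C, ∃ (Z : C) (g : X ⟶ Z), E (𝟙 X) g
  id_admEpi : ∀ X : C, ∃ (W : C) (f : W ⟶ X), E f (𝟙 X)
  admMono_comp : ∀ ⦃X Y Z : C⦄ (f : X ⟶ Y) (f' : Y ⟶ Z),
    (∃ (W : C) (g : Y ⟶ W), E f g) → (∃ (W : C) (g : Z ⟶ W), E f' g) →
    ∃ (W : C) (g : Z ⟶ W), E (f ≫ f') g
  admEpi_comp : ∀ ⦃X Y Z : C⦄ (g : X ⟶ Y) (g' : Y ⟶ Z),
    (∃ (W : C) (f : W ⟶ X), E f g) → (∃ (W : C) (f : W ⟶ Y), E f g') →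
    ∃ (W : C) (f : W ⟶ X), E f (g ≫ g')
  pushout_admMono : ∀ ⦃X Y : C⦄ (f : X ⟶ Y), (∃ (W : C) (g : Y ⟶ W), E f g) →
    ∀ ⦃Z : C⦄ (h : X ⟶ Z), ∃ (P : C) (inl : Y ⟶ P) (inr : Z ⟶ P),
      IsPushout f h inl inr ∧ ∃ (W : C) (g : P ⟶ W), E inr g
  pullback_admEpi : ∀ ⦃X Y : C⦄ (g : X ⟶ Y), (∃ (W : C) (f : W ⟶ X), E f g) →
    ∀ ⦃Z : C⦄ (h : Z ⟶ Y), ∃ (P : C) (fst : P ⟶ X) (snd : P ⟶ Z),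
      IsPullback fst snd g h ∧ ∃ (W : C) (f : W ⟶ P), E f snd

variable {C}

/-- A morphism is an admissible monomorphism for an exact structure if it occurs as the
first map of an exact pair. -/
def ExactStructure.AdmMono (S : ExactStructure C) {X Y : C} (f : X ⟶ Y) : Prop :=
  ∃ (W : C) (g : Y ⟶ W), S.E f g


section AuxLemmas

/-- Transport a kernel-fork limit along an isomorphism of composable pairs. -/
noncomputable def isLimitOfIsoSq {X Y Z X' Y' Z' : C} {f : X ⟶ Y} {g : Y ⟶ Z} {f' : X' ⟶ Y'}
    {g' : Y' ⟶ Z'} (eX : X ≅ X') (eY : Y ≅ Y') (eZ : Z ≅ Z')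
    (hf : f ≫ eY.hom = eX.hom ≫ f') (hg : g ≫ eZ.hom = eY.hom ≫ g')
    {w : f ≫ g = 0} (h : IsLimit (KernelFork.ofι f w)) (w' : f' ≫ g' = 0) :
    IsLimit (KernelFork.ofι f' w') := by
  have hmf : Mono f := by simpa using mono_of_isLimit_fork h
  have hf'eq : f' = eX.inv ≫ f ≫ eY.hom := by rw [hf]; simp
  have hmf' : Mono f' := by rw [hf'eq]; infer_instance
  have hgeq : g = eY.hom ≫ g' ≫ eZ.inv := by
    rw [← Category.assoc, ← hg, Category.assoc, Iso.hom_inv_id, Category.comp_id]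
  refine KernelFork.IsLimit.ofι' f' w' (fun {A} k hk => ?_)
  have hk' : (k ≫ eY.inv) ≫ g = 0 := by
    simp only [hgeq, Category.assoc, Iso.inv_hom_id_assoc]
    rw [← Category.assoc, hk, zero_comp]
  obtain ⟨l, hl⟩ := KernelFork.IsLimit.lift' h (k ≫ eY.inv) hk'
  have hl' : l ≫ f = k ≫ eY.inv := by simpa using hl
  refine ⟨l ≫ eX.hom, ?_⟩
  rw [Category.assoc, ← hf, ← Category.assoc, hl', Category.assoc, Iso.inv_hom_id,
    Category.comp_id]

/-- Transport a cokernel-cofork colimit along an isomorphism of composable pairs. -/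
noncomputable def isColimitOfIsoSq {X Y Z X' Y' Z' : C} {f : X ⟶ Y} {g : Y ⟶ Z} {f' : X' ⟶ Y'}
    {g' : Y' ⟶ Z'} (eX : X ≅ X') (eY : Y ≅ Y') (eZ : Z ≅ Z')
    (hf : f ≫ eY.hom = eX.hom ≫ f') (hg : g ≫ eZ.hom = eY.hom ≫ g')
    {w : f ≫ g = 0} (h : IsColimit (CokernelCofork.ofπ g w)) (w' : f' ≫ g' = 0) :
    IsColimit (CokernelCofork.ofπ g' w') := by
  have hmg : Epi g := by simpa using epi_of_isColimit_cofork h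
  have hg'eq : g' = eY.inv ≫ g ≫ eZ.hom := by rw [hg]; simp
  have hmg' : Epi g' := by rw [hg'eq]; infer_instance
  have hfeq : f = eX.hom ≫ f' ≫ eY.inv := by
    rw [← Category.assoc, ← hf, Category.assoc, Iso.hom_inv_id, Category.comp_id]
  refine CokernelCofork.IsColimit.ofπ' g' w' (fun {A} k hk => ?_)
  have hk' : f ≫ (eY.hom ≫ k) = 0 := by
    rw [hfeq]
    simp only [Category.assoc, Iso.inv_hom_id_assoc]
    rw [hk, comp_zero]
  obtain ⟨l, hl⟩ := CokernelCofork.IsColimit.desc' h (eY.hom ≫ k) hk'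
  have hl' : g ≫ l = eY.hom ≫ k := by simpa using hl
  refine ⟨eZ.inv ≫ l, ?_⟩
  rw [hg'eq]
  simp only [Category.assoc, Iso.hom_inv_id_assoc]
  rw [hl', Iso.inv_hom_id_assoc]

lemma IsKernelMorphism.isLimit_cokernelπ [HasCokernels C] {X Y : C} {f : X ⟶ Y}
    (hf : IsKernelMorphism C f) :
    Nonempty (IsLimit (KernelFork.ofι f (cokernel.condition f))) := by
  obtain ⟨W, g, w, ⟨h⟩⟩ := hf
  have : Mono f := by simpa using mono_of_isLimit_fork h
  refine ⟨KernelFork.IsLimit.ofι' f _ (fun {A} k hk => ?_)⟩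
  have hk' : k ≫ g = 0 := by
    rw [← cokernel.π_desc f g w, ← Category.assoc, hk, zero_comp]
  obtain ⟨l, hl⟩ := KernelFork.IsLimit.lift' h k hk'
  exact ⟨l, by simpa using hl⟩

lemma IsCokernelMorphism.isColimit_kernelι [HasKernels C] {X Y : C} {g : X ⟶ Y}
    (hg : IsCokernelMorphism C g) :
    Nonempty (IsColimit (CokernelCofork.ofπ g (kernel.condition g))) := by
  obtain ⟨W, u, w, ⟨h⟩⟩ := hg
  have : Epi g := by simpa using epi_of_isColimit_cofork h
  refine ⟨CokernelCofork.IsColimit.ofπ' g _ (fun {A} k hk => ?_)⟩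
  have hk' : u ≫ k = 0 := by
    rw [← kernel.lift_ι g u w, Category.assoc, hk, comp_zero]
  obtain ⟨l, hl⟩ := CokernelCofork.IsColimit.desc' h k hk'
  exact ⟨l, by simpa using hl⟩

/-- Pullbacks of kernels are kernels (in any category with the relevant data). -/
lemma isKernelMorphism_of_isPullback {P Q R T : C} {a : P ⟶ Q} {b : P ⟶ R} {c : Q ⟶ T}
    {d : R ⟶ T} (sq : IsPullback a b c d) (hd : IsKernelMorphism C d) :
    IsKernelMorphism C a := by
  obtain ⟨W, h, w, ⟨hl⟩⟩ := hd
  have md : Mono d := by simpa using mono_of_isLimit_fork hl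
  have wa : a ≫ c ≫ h = 0 := by
    rw [← Category.assoc, sq.w, Category.assoc, w, comp_zero]
  have ma : Mono a := by
    constructor
    intro T' u v huv
    have hb : u ≫ b = v ≫ b := by
      rw [← cancel_mono d, Category.assoc, Category.assoc, ← sq.w, ← Category.assoc,
        ← Category.assoc, huv]
    exact sq.hom_ext huv hb
  refine ⟨W, c ≫ h, wa, ⟨KernelFork.IsLimit.ofι' a wa (fun {T'} t ht => ?_)⟩⟩
  obtain ⟨s, hs⟩ := KernelFork.IsLimit.lift' hl (t ≫ c) (by rwa [Category.assoc])
  have hs' : t ≫ c = s ≫ d := by simpa using hs.symm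
  exact ⟨sq.lift t s hs', sq.lift_fst _ _ _⟩

end AuxLemmas

section CompLemmas

lemma isKernelMorphism_comp [HasFiniteBiproducts C] [HasKernels C] [HasCokernels C]
    (H2 : ∀ ⦃W X Y Z : C⦄ (f : W ⟶ X) (g : W ⟶ Y) (inl : X ⟶ Z) (inr : Y ⟶ Z),
        IsPushout f g inl inr → IsKernelMorphism C f → IsKernelMorphism C inr)
    {X Y Z : C} {f : X ⟶ Y} {f' : Y ⟶ Z}
    (hf : IsKernelMorphism C f) (hf' : IsKernelMorphism C f') :
    IsKernelMorphism C (f ≫ f') := by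
  haveI hbb : HasBinaryBiproducts C := hasBinaryBiproducts_of_finite_biproducts C
  haveI hce : HasCoequalizers C := Preadditive.hasCoequalizers_of_hasCokernels
  haveI hpo : HasPushouts C := hasPushouts_of_hasBinaryCoproducts_of_hasCoequalizers C
  obtain ⟨hfk⟩ := hf.isLimit_cokernelπ
  obtain ⟨hfk'⟩ := hf'.isLimit_cokernelπ
  set k : Y ⟶ cokernel f := cokernel.π f with hk
  set q₁ : Z ⟶ pushout f' k := pushout.inl f' k with hq₁
  set q₂ : cokernel f ⟶ pushout f' k := pushout.inr f' k with hq₂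
  have hPO : IsPushout f' k q₁ q₂ := IsPushout.of_hasPushout f' k
  have hkq : IsKernelMorphism C q₂ := H2 f' k q₁ q₂ hPO hf'
  have mq₂ : Mono q₂ := by
    obtain ⟨_, _, _, ⟨hh⟩⟩ := hkq
    simpa using mono_of_isLimit_fork hh
  have mf : Mono f := by simpa using mono_of_isLimit_fork hfk
  have mf' : Mono f' := by simpa using mono_of_isLimit_fork hfk'
  have mff' : Mono (f ≫ f') := mono_comp f f'
  have wcomp : (f ≫ f') ≫ q₁ = 0 := by
    rw [Category.assoc, hq₁, pushout.condition, ← Category.assoc,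
      show f ≫ k = 0 from cokernel.condition f, zero_comp]
  refine ⟨_, q₁, wcomp, ⟨KernelFork.IsLimit.ofι' _ _ (fun {T} t ht => ?_)⟩⟩
  have hu : f' ≫ cokernel.π f' = k ≫ (0 : cokernel f ⟶ cokernel f') := by
    rw [cokernel.condition, comp_zero]
  have htl : t ≫ cokernel.π f' = 0 := by
    rw [← pushout.inl_desc (cokernel.π f') 0 hu, ← Category.assoc]
    rw [show t ≫ pushout.inl f' k = 0 from ht, zero_comp]
  obtain ⟨s, hs⟩ := KernelFork.IsLimit.lift' hfk' t htl
  have hs' : s ≫ f' = t := by simpa using hs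
  have hsk : s ≫ k = 0 := by
    rw [← cancel_mono q₂, Category.assoc, hq₂, ← pushout.condition, ← Category.assoc, hs',
      ← hq₁, ht, zero_comp]
  obtain ⟨r, hr⟩ := KernelFork.IsLimit.lift' hfk s hsk
  have hr' : r ≫ f = s := by simpa using hr
  exact ⟨r, by rw [← Category.assoc, hr', hs']⟩

lemma isCokernelMorphism_comp [HasFiniteBiproducts C] [HasKernels C] [HasCokernels C]
    (H1 : ∀ ⦃W X Y Z : C⦄ (a : W ⟶ X) (b : W ⟶ Y) (c : X ⟶ Z) (d : Y ⟶ Z),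
        IsPullback a b c d → IsCokernelMorphism C d → IsCokernelMorphism C a)
    {X Y Z : C} {g : X ⟶ Y} {g' : Y ⟶ Z}
    (hg : IsCokernelMorphism C g) (hg' : IsCokernelMorphism C g') :
    IsCokernelMorphism C (g ≫ g') := by
  haveI hbb : HasBinaryBiproducts C := hasBinaryBiproducts_of_finite_biproducts C
  haveI heq : HasEqualizers C := Preadditive.hasEqualizers_of_hasKernels
  haveI hpb : HasPullbacks C := hasPullbacks_of_hasBinaryProducts_of_hasEqualizers C
  obtain ⟨hgc⟩ := hg.isColimit_kernelι
  obtain ⟨hgc'⟩ := hg'.isColimit_kernelι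
  set k : kernel g' ⟶ Y := kernel.ι g' with hk
  set p₁ : pullback g k ⟶ X := pullback.fst g k with hp₁
  set p₂ : pullback g k ⟶ kernel g' := pullback.snd g k with hp₂
  have hPB : IsPullback p₁ p₂ g k := IsPullback.of_hasPullback g k
  have hcp : IsCokernelMorphism C p₂ := H1 p₂ p₁ k g hPB.flip hg
  have ep₂ : Epi p₂ := by
    obtain ⟨_, _, _, ⟨hh⟩⟩ := hcp
    simpa using epi_of_isColimit_cofork hh
  have eg : Epi g := by simpa using epi_of_isColimit_cofork hgc
  have eg' : Epi g' := by simpa using epi_of_isColimit_cofork hgc'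
  have egg' : Epi (g ≫ g') := epi_comp g g'
  have wcomp : p₁ ≫ g ≫ g' = 0 := by
    rw [← Category.assoc, hp₁, pullback.condition, Category.assoc,
      show k ≫ g' = 0 from kernel.condition g', comp_zero]
  refine ⟨_, p₁, wcomp, ⟨CokernelCofork.IsColimit.ofπ' _ _ (fun {T} t ht => ?_)⟩⟩
  have hu : kernel.ι g ≫ g = (0 : kernel g ⟶ kernel g') ≫ k := by
    rw [kernel.condition, zero_comp]
  have htl : kernel.ι g ≫ t = 0 := by
    rw [← pullback.lift_fst (kernel.ι g) 0 hu, Category.assoc]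
    rw [show pullback.fst g k ≫ t = 0 from ht, comp_zero]
  obtain ⟨s, hs⟩ := CokernelCofork.IsColimit.desc' hgc t htl
  have hs' : g ≫ s = t := by simpa using hs
  have hsk : k ≫ s = 0 := by
    rw [← cancel_epi p₂, ← Category.assoc, hp₂, ← pullback.condition, Category.assoc, hs',
      ← hp₁, ht, comp_zero]
  obtain ⟨r, hr⟩ := CokernelCofork.IsColimit.desc' hgc' s hsk
  have hr' : g' ≫ r = s := by simpa using hr
  exact ⟨r, by rw [Category.assoc, hr', hs']⟩

end CompLemmas

open ZeroObject in
private def maxES [HasFiniteBiproducts C] [HasKernels C] [HasCokernels C]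
    (H1 : ∀ ⦃W X Y Z : C⦄ (a : W ⟶ X) (b : W ⟶ Y) (c : X ⟶ Z) (d : Y ⟶ Z),
        IsPullback a b c d → IsCokernelMorphism C d → IsCokernelMorphism C a)
    (H2 : ∀ ⦃W X Y Z : C⦄ (f : W ⟶ X) (g : W ⟶ Y) (inl : X ⟶ Z) (inr : Y ⟶ Z),
        IsPushout f g inl inr → IsKernelMorphism C f → IsKernelMorphism C inr) :
    ExactStructure C where
  E := fun X Y Z f g => ∃ w : f ≫ g = 0,
    Nonempty (IsLimit (KernelFork.ofι f w)) ∧ Nonempty (IsColimit (CokernelCofork.ofπ g w))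
  kernel_cokernel := fun X Y Z f g h => h
  iso_closed := by
    haveI hbb : HasBinaryBiproducts C := hasBinaryBiproducts_of_finite_biproducts C
    haveI hce : HasCoequalizers C := Preadditive.hasCoequalizers_of_hasCokernels
    haveI heq : HasEqualizers C := Preadditive.hasEqualizers_of_hasKernels
    haveI hpo : HasPushouts C := hasPushouts_of_hasBinaryCoproducts_of_hasCoequalizers C
    haveI hpb : HasPullbacks C := hasPullbacks_of_hasBinaryProducts_of_hasEqualizers C
    rintro X Y Z X' Y' Z' f g f' g' eX eY eZ hf hg ⟨w, ⟨hl⟩, ⟨hc⟩⟩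
    have hf'eq : f' = eX.inv ≫ f ≫ eY.hom := by rw [hf]; simp
    have hg'eq : g' = eY.inv ≫ g ≫ eZ.hom := by rw [hg]; simp
    have w' : f' ≫ g' = 0 := by
      rw [hf'eq, hg'eq]
      simp only [Category.assoc, Iso.hom_inv_id_assoc]
      rw [reassoc_of% w]
      simp
    exact ⟨w', ⟨isLimitOfIsoSq eX eY eZ hf hg hl w'⟩, ⟨isColimitOfIsoSq eX eY eZ hf hg hc w'⟩⟩
  id_admMono := by
    haveI hbb : HasBinaryBiproducts C := hasBinaryBiproducts_of_finite_biproducts C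
    haveI hce : HasCoequalizers C := Preadditive.hasCoequalizers_of_hasCokernels
    haveI heq : HasEqualizers C := Preadditive.hasEqualizers_of_hasKernels
    haveI hpo : HasPushouts C := hasPushouts_of_hasBinaryCoproducts_of_hasCoequalizers C
    haveI hpb : HasPullbacks C := hasPullbacks_of_hasBinaryProducts_of_hasEqualizers C
    intro X
    refine ⟨0, 0, by simp, ⟨KernelFork.IsLimit.ofId _ rfl⟩, ⟨?_⟩⟩
    refine CokernelCofork.IsColimit.ofπ _ _ (fun {T} t ht => 0) (fun {T} t ht => ?_)
      (fun {T} t ht m hm => (isZero_zero C).eq_of_src _ _)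
    rw [zero_comp]
    rw [Category.id_comp] at ht
    exact ht.symm
  id_admEpi := by
    haveI hbb : HasBinaryBiproducts C := hasBinaryBiproducts_of_finite_biproducts C
    haveI hce : HasCoequalizers C := Preadditive.hasCoequalizers_of_hasCokernels
    haveI heq : HasEqualizers C := Preadditive.hasEqualizers_of_hasKernels
    haveI hpo : HasPushouts C := hasPushouts_of_hasBinaryCoproducts_of_hasCoequalizers C
    haveI hpb : HasPullbacks C := hasPullbacks_of_hasBinaryProducts_of_hasEqualizers C
    intro X
    refine ⟨0, 0, by simp, ⟨?_⟩, ⟨CokernelCofork.IsColimit.ofId _ rfl⟩⟩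
    refine KernelFork.IsLimit.ofι _ _ (fun {T} t ht => 0) (fun {T} t ht => ?_)
      (fun {T} t ht m hm => (isZero_zero C).eq_of_tgt _ _)
    rw [zero_comp]
    rw [Category.comp_id] at ht
    exact ht.symm
  admMono_comp := by
    haveI hbb : HasBinaryBiproducts C := hasBinaryBiproducts_of_finite_biproducts C
    haveI hce : HasCoequalizers C := Preadditive.hasCoequalizers_of_hasCokernels
    haveI heq : HasEqualizers C := Preadditive.hasEqualizers_of_hasKernels
    haveI hpo : HasPushouts C := hasPushouts_of_hasBinaryCoproducts_of_hasCoequalizers C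
    haveI hpb : HasPullbacks C := hasPullbacks_of_hasBinaryProducts_of_hasEqualizers C
    rintro X Y Z f f' ⟨W1, g1, w1, ⟨hl1⟩, -⟩ ⟨W2, g2, w2, ⟨hl2⟩, -⟩
    have h3 : IsKernelMorphism C (f ≫ f') :=
      isKernelMorphism_comp H2 ⟨W1, g1, w1, ⟨hl1⟩⟩ ⟨W2, g2, w2, ⟨hl2⟩⟩
    obtain ⟨hl3⟩ := h3.isLimit_cokernelπ
    exact ⟨cokernel (f ≫ f'), cokernel.π _, cokernel.condition _, ⟨hl3⟩,
      ⟨cokernelIsCokernel _⟩⟩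
  admEpi_comp := by
    haveI hbb : HasBinaryBiproducts C := hasBinaryBiproducts_of_finite_biproducts C
    haveI hce : HasCoequalizers C := Preadditive.hasCoequalizers_of_hasCokernels
    haveI heq : HasEqualizers C := Preadditive.hasEqualizers_of_hasKernels
    haveI hpo : HasPushouts C := hasPushouts_of_hasBinaryCoproducts_of_hasCoequalizers C
    haveI hpb : HasPullbacks C := hasPullbacks_of_hasBinaryProducts_of_hasEqualizers C
    rintro X Y Z g g' ⟨W1, f1, w1, -, ⟨hc1⟩⟩ ⟨W2, f2, w2, -, ⟨hc2⟩⟩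
    have h3 : IsCokernelMorphism C (g ≫ g') :=
      isCokernelMorphism_comp H1 ⟨W1, f1, w1, ⟨hc1⟩⟩ ⟨W2, f2, w2, ⟨hc2⟩⟩
    obtain ⟨hc3⟩ := h3.isColimit_kernelι
    exact ⟨kernel (g ≫ g'), kernel.ι _, kernel.condition _, ⟨kernelIsKernel _⟩, ⟨hc3⟩⟩
  pushout_admMono := by
    haveI hbb : HasBinaryBiproducts C := hasBinaryBiproducts_of_finite_biproducts C
    haveI hce : HasCoequalizers C := Preadditive.hasCoequalizers_of_hasCokernels
    haveI heq : HasEqualizers C := Preadditive.hasEqualizers_of_hasKernels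
    haveI hpo : HasPushouts C := hasPushouts_of_hasBinaryCoproducts_of_hasCoequalizers C
    haveI hpb : HasPullbacks C := hasPullbacks_of_hasBinaryProducts_of_hasEqualizers C
    rintro X Y f ⟨W1, g1, w1, ⟨hl1⟩, -⟩ Z h
    have hPO : IsPushout f h (pushout.inl f h) (pushout.inr f h) := IsPushout.of_hasPushout f h
    have h2 : IsKernelMorphism C (pushout.inr f h) := H2 f h _ _ hPO ⟨W1, g1, w1, ⟨hl1⟩⟩
    obtain ⟨hl2⟩ := h2.isLimit_cokernelπ
    exact ⟨pushout f h, pushout.inl f h, pushout.inr f h, hPO,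
      cokernel _, cokernel.π _, cokernel.condition _, ⟨hl2⟩, ⟨cokernelIsCokernel _⟩⟩
  pullback_admEpi := by
    haveI hbb : HasBinaryBiproducts C := hasBinaryBiproducts_of_finite_biproducts C
    haveI hce : HasCoequalizers C := Preadditive.hasCoequalizers_of_hasCokernels
    haveI heq : HasEqualizers C := Preadditive.hasEqualizers_of_hasKernels
    haveI hpo : HasPushouts C := hasPushouts_of_hasBinaryCoproducts_of_hasCoequalizers C
    haveI hpb : HasPullbacks C := hasPullbacks_of_hasBinaryProducts_of_hasEqualizers C
    rintro X Y g ⟨W1, f1, w1, -, ⟨hc1⟩⟩ Z h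
    have hPB : IsPullback (pullback.fst g h) (pullback.snd g h) g h :=
      IsPullback.of_hasPullback g h
    have h2 : IsCokernelMorphism C (pullback.snd g h) :=
      H1 _ _ _ _ hPB.flip ⟨W1, f1, w1, ⟨hc1⟩⟩
    obtain ⟨hc2⟩ := h2.isColimit_kernelι
    exact ⟨pullback g h, pullback.fst g h, pullback.snd g h, hPB,
      kernel _, kernel.ι _, kernel.condition _, ⟨kernelIsKernel _⟩, ⟨hc2⟩⟩

open ZeroObject in
/-- A pre-abelian category is quasi-abelian (cokernels stable under pullback and kernels
stable under pushout) if and only if it admits an exact structure with the admissible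
intersection property. -/
theorem stmt14 [HasFiniteBiproducts C] [HasKernels C] [HasCokernels C] :
    ((∀ ⦃W X Y Z : C⦄ (a : W ⟶ X) (b : W ⟶ Y) (c : X ⟶ Z) (d : Y ⟶ Z),
        IsPullback a b c d → IsCokernelMorphism C d → IsCokernelMorphism C a) ∧
     (∀ ⦃W X Y Z : C⦄ (f : W ⟶ X) (g : W ⟶ Y) (inl : X ⟶ Z) (inr : Y ⟶ Z),
        IsPushout f g inl inr → IsKernelMorphism C f → IsKernelMorphism C inr)) ↔
    (∃ S : ExactStructure C,
      ∀ ⦃A B C' D : C⦄ (a : A ⟶ B) (b : A ⟶ C') (c : B ⟶ D) (d : C' ⟶ D),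
        S.AdmMono c → S.AdmMono d → IsPullback a b c d → S.AdmMono a ∧ S.AdmMono b) := by
  haveI hbb : HasBinaryBiproducts C := hasBinaryBiproducts_of_finite_biproducts C
  haveI hce : HasCoequalizers C := Preadditive.hasCoequalizers_of_hasCokernels
  haveI heq : HasEqualizers C := Preadditive.hasEqualizers_of_hasKernels
  haveI hpo : HasPushouts C := hasPushouts_of_hasBinaryCoproducts_of_hasCoequalizers C
  haveI hpb : HasPullbacks C := hasPullbacks_of_hasBinaryProducts_of_hasEqualizers C
  constructor
  · rintro ⟨H1, H2⟩
    refine ⟨maxES H1 H2, ?_⟩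
    rintro A B C' D a b c d ⟨Wc, gc, wc, ⟨hlc⟩, -⟩ ⟨Wd, gd, wd, ⟨hld⟩, -⟩ sq
    have ha := isKernelMorphism_of_isPullback sq ⟨Wd, gd, wd, ⟨hld⟩⟩
    have hb := isKernelMorphism_of_isPullback sq.flip ⟨Wc, gc, wc, ⟨hlc⟩⟩
    obtain ⟨hla⟩ := ha.isLimit_cokernelπ
    obtain ⟨hlb⟩ := hb.isLimit_cokernelπ
    exact ⟨⟨cokernel a, cokernel.π a, cokernel.condition a, ⟨hla⟩, ⟨cokernelIsCokernel a⟩⟩,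
           ⟨cokernel b, cokernel.π b, cokernel.condition b, ⟨hlb⟩, ⟨cokernelIsCokernel b⟩⟩⟩
  · rintro ⟨S, hS⟩
    have admMono_iso : ∀ {X Y X' Y' : C} {f : X ⟶ Y} {f' : X' ⟶ Y'} (eX : X ≅ X') (eY : Y ≅ Y'),
        f ≫ eY.hom = eX.hom ≫ f' → S.AdmMono f → S.AdmMono f' := by
      rintro X Y X' Y' f f' eX eY hcomm ⟨W, g, hg⟩
      exact ⟨W, eY.inv ≫ g,
        S.iso_closed f g f' (eY.inv ≫ g) eX eY (Iso.refl W) hcomm (by simp) hg⟩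
    have zero_adm : ∀ Y : C, S.E (0 : (0 : C) ⟶ Y) (𝟙 Y) := by
      intro Y
      obtain ⟨W, f, hE⟩ := S.id_admEpi Y
      obtain ⟨w, ⟨hl⟩, -⟩ := S.kernel_cokernel f (𝟙 Y) hE
      have hf0 : f = 0 := by simpa using w
      have hW : IsZero W := by
        rw [IsZero.iff_id_eq_zero]
        apply Fork.IsLimit.hom_ext hl
        simp [hf0]
      exact S.iso_closed f (𝟙 Y) 0 (𝟙 Y) hW.isoZero (Iso.refl Y) (Iso.refl Y)
        (by simp [hf0]) (by simp) hE
    have inl_adm : ∀ Y Z : C, S.AdmMono (biprod.inl : Y ⟶ Y ⊞ Z) := by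
      intro Y Z
      obtain ⟨P, inl', inr', hPO, hadm⟩ :=
        S.pushout_admMono (0 : (0 : C) ⟶ Z) ⟨Z, 𝟙 Z, zero_adm Z⟩ (0 : (0 : C) ⟶ Y)
      have hBP : IsPushout (0 : (0 : C) ⟶ Z) (0 : (0 : C) ⟶ Y)
          (biprod.inr : Z ⟶ Y ⊞ Z) biprod.inl := by
        refine IsPushout.of_isColimit (c := PushoutCocone.mk (biprod.inr : Z ⟶ Y ⊞ Z) biprod.inl
          (by simp)) ?_
        refine PushoutCocone.IsColimit.mk _ (fun s => biprod.desc s.inr s.inl)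
          (fun s => biprod.inr_desc _ _) (fun s => biprod.inl_desc _ _)
          (fun s m h1 h2 => ?_)
        apply biprod.hom_ext' <;> simp [h1, h2]
      have ecomm : inr' ≫ (hPO.isoIsPushout _ _ hBP).hom = (Iso.refl Y).hom ≫ biprod.inl := by
        simp only [Iso.refl_hom, Category.id_comp]
        exact IsPushout.inr_isoIsPushout_hom _ _ hPO hBP
      exact admMono_iso (Iso.refl Y) (hPO.isoIsPushout _ _ hBP) ecomm hadm
    have kerι_adm : ∀ {Y Z : C} (g : Y ⟶ Z), S.AdmMono (kernel.ι g) := by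
      intro Y Z g
      set d : Y ⟶ Y ⊞ Z := biprod.inl + g ≫ biprod.inr with hd
      set u : Y ⊞ Z ⟶ Y ⊞ Z := biprod.fst ≫ g ≫ biprod.inr with hu
      have huu : u ≫ u = 0 := by simp [hu]
      have hinv : (𝟙 (Y ⊞ Z) + u) ≫ (𝟙 (Y ⊞ Z) - u) = 𝟙 (Y ⊞ Z) := by
        simp only [Preadditive.comp_sub, Preadditive.add_comp, Category.id_comp,
          Category.comp_id, huu]
        abel
      have hinv' : (𝟙 (Y ⊞ Z) - u) ≫ (𝟙 (Y ⊞ Z) + u) = 𝟙 (Y ⊞ Z) := by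
        simp only [Preadditive.comp_add, Preadditive.sub_comp, Category.id_comp,
          Category.comp_id, huu]
        abel
      have d_adm : S.AdmMono d := by
        refine admMono_iso (Iso.refl Y)
          (⟨𝟙 (Y ⊞ Z) + u, 𝟙 (Y ⊞ Z) - u, hinv, hinv'⟩ : Y ⊞ Z ≅ Y ⊞ Z) ?_ (inl_adm Y Z)
        change (biprod.inl : Y ⟶ Y ⊞ Z) ≫ (𝟙 (Y ⊞ Z) + u) = 𝟙 Y ≫ d
        simp [hd, hu, Preadditive.comp_add]
      have hcondfst : ∀ {T : C} (t1 t2 : T ⟶ Y),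
          t1 ≫ (biprod.inl : Y ⟶ Y ⊞ Z) = t2 ≫ d → t1 = t2 := by
        intro T t1 t2 h
        have h2 := congrArg (fun z => z ≫ (biprod.fst : Y ⊞ Z ⟶ Y)) h
        simpa [hd, Preadditive.comp_add, Preadditive.add_comp] using h2
      have hcondsnd : ∀ {T : C} (t1 t2 : T ⟶ Y),
          t1 ≫ (biprod.inl : Y ⟶ Y ⊞ Z) = t2 ≫ d → t2 ≫ g = 0 := by
        intro T t1 t2 h
        have h2 := congrArg (fun z => z ≫ (biprod.snd : Y ⊞ Z ⟶ Z)) h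
        simp [hd, Preadditive.comp_add, Preadditive.add_comp] at h2
        exact h2.symm
      have keq : kernel.ι g ≫ (biprod.inl : Y ⟶ Y ⊞ Z) = kernel.ι g ≫ d := by
        simp [hd, Preadditive.comp_add, reassoc_of% (kernel.condition g)]
      have hsq : IsPullback (kernel.ι g) (kernel.ι g) (biprod.inl : Y ⟶ Y ⊞ Z) d := by
        refine IsPullback.of_isLimit (c := PullbackCone.mk (kernel.ι g) (kernel.ι g) keq) ?_
        refine PullbackCone.IsLimit.mk _ (fun s => kernel.lift g s.snd (hcondsnd _ _ s.condition))
          (fun s => ?_) (fun s => kernel.lift_ι _ _ _) (fun s m h1 h2 => ?_)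
        · rw [kernel.lift_ι]
          exact (hcondfst _ _ s.condition).symm
        · rw [← cancel_mono (kernel.ι g), h2, kernel.lift_ι]
      exact (hS _ _ _ _ (inl_adm Y Z) d_adm hsq).1
    have kernel_adm : ∀ {X Y : C} {f : X ⟶ Y}, IsKernelMorphism C f → S.AdmMono f := by
      rintro X Y f ⟨W, g, w, ⟨hl⟩⟩
      obtain ⟨m1, hm1⟩ := KernelFork.IsLimit.lift' hl (kernel.ι g) (kernel.condition g)
      have hm1' : m1 ≫ f = kernel.ι g := by simpa using hm1
      have hmono : Mono f := by simpa using mono_of_isLimit_fork hl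
      have he1 : m1 ≫ kernel.lift g f w = 𝟙 (kernel g) := by
        rw [← cancel_mono (kernel.ι g), Category.assoc, kernel.lift_ι, hm1', Category.id_comp]
      have he2 : kernel.lift g f w ≫ m1 = 𝟙 X := by
        rw [← cancel_mono f, Category.assoc, hm1', kernel.lift_ι, Category.id_comp]
      refine admMono_iso (⟨m1, kernel.lift g f w, he1, he2⟩ : kernel g ≅ X) (Iso.refl Y) ?_
        (kerι_adm g)
      change kernel.ι g ≫ 𝟙 Y = m1 ≫ f
      rw [Category.comp_id, hm1']
    have cokernel_admEpi : ∀ {Y Z : C} {g : Y ⟶ Z}, IsCokernelMorphism C g →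
        ∃ (W : C) (f : W ⟶ Y), S.E f g := by
      rintro Y Z g ⟨V, u, wu, ⟨hcu⟩⟩
      have hepi : Epi g := by simpa using epi_of_isColimit_cofork hcu
      have hcolim : IsColimit (CokernelCofork.ofπ g (kernel.condition g)) := by
        refine CokernelCofork.IsColimit.ofπ' g _ (fun {A} t ht => ?_)
        have hu : u ≫ t = 0 := by
          rw [← kernel.lift_ι g u wu, Category.assoc, ht, comp_zero]
        obtain ⟨l, hl⟩ := CokernelCofork.IsColimit.desc' hcu t hu
        exact ⟨l, by simpa using hl⟩
      obtain ⟨W₁, g₁, hE⟩ := kerι_adm g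
      obtain ⟨w₁, -, ⟨hc₁⟩⟩ := S.kernel_cokernel _ _ hE
      obtain ⟨d1, hd1⟩ := CokernelCofork.IsColimit.desc' hc₁ g (kernel.condition g)
      obtain ⟨d2, hd2⟩ := CokernelCofork.IsColimit.desc' hcolim g₁ w₁
      have hd1' : g₁ ≫ d1 = g := by simpa using hd1
      have hd2' : g ≫ d2 = g₁ := by simpa using hd2
      have hepi₁ : Epi g₁ := by simpa using epi_of_isColimit_cofork hc₁
      have hz1 : d1 ≫ d2 = 𝟙 W₁ := by
        rw [← cancel_epi g₁, ← Category.assoc, hd1', hd2', Category.comp_id]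
      have hz2 : d2 ≫ d1 = 𝟙 Z := by
        rw [← cancel_epi g, ← Category.assoc, hd2', hd1', Category.comp_id]
      refine ⟨kernel g, kernel.ι g, S.iso_closed (kernel.ι g) g₁ (kernel.ι g) g
        (Iso.refl _) (Iso.refl _) (⟨d1, d2, hz1, hz2⟩ : W₁ ≅ Z) (by simp) ?_ hE⟩
      change g₁ ≫ d1 = 𝟙 Y ≫ g
      rw [Category.id_comp, hd1']
    constructor
    · intro W X Y Z a b c d sq hd
      obtain ⟨K, f₀, hE₀⟩ := cokernel_admEpi hd
      obtain ⟨P, fst, snd, hP, W₂, f₂, hE₂⟩ := S.pullback_admEpi d ⟨K, f₀, hE₀⟩ c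
      have ha : (sq.flip.isoIsPullback _ _ hP).hom ≫ snd = a :=
        IsPullback.isoIsPullback_hom_snd _ _ sq.flip hP
      have hE₂' : S.E (f₂ ≫ (sq.flip.isoIsPullback _ _ hP).inv) a := by
        refine S.iso_closed f₂ snd (f₂ ≫ (sq.flip.isoIsPullback _ _ hP).inv) a (Iso.refl W₂)
          (sq.flip.isoIsPullback _ _ hP).symm (Iso.refl X) (by simp) ?_ hE₂
        simp only [Iso.refl_hom, Category.comp_id, Iso.symm_hom]
        exact ((Iso.inv_comp_eq _).mpr ha.symm).symm
      obtain ⟨w, -, hcol⟩ := S.kernel_cokernel _ _ hE₂'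
      exact ⟨W₂, f₂ ≫ (sq.flip.isoIsPullback _ _ hP).inv, w, hcol⟩
    · intro W X Y Z f g inl inr sq hf
      obtain ⟨P, inl', inr', hP, W₃, g₃, hE₃⟩ := S.pushout_admMono f (kernel_adm hf) g
      have hE₃' : S.E inr ((hP.isoIsPushout _ _ sq).inv ≫ g₃) := by
        refine S.iso_closed inr' g₃ inr ((hP.isoIsPushout _ _ sq).inv ≫ g₃) (Iso.refl Y)
          (hP.isoIsPushout _ _ sq) (Iso.refl W₃) ?_ (by simp) hE₃
        simp only [Iso.refl_hom, Category.id_comp]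
        exact IsPushout.inr_isoIsPushout_hom _ _ hP sq
      obtain ⟨w, hlim, -⟩ := S.kernel_cokernel _ _ hE₃'
      exact ⟨W₃, (hP.isoIsPushout _ _ sq).inv ≫ g₃, w, hlim⟩
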